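/- arXiv:0806.2902 — 2 statements merged into one kernel-verified Lean document; each statement's English description precedes it below -/
import Mathlib

section
/- Define p₂ : S × S → SU(2) by p₂(A₁, A₂) = A₁·A₂, where S is the set of trace-zero matrices in SU(2). If A₁ ≠ A₂ and A₁ ≠ -A₂, then p₂ is a submersion at (A₁, A₂); equivalently, the differential of p₂ at (A₁, A₂) has rank 3. -/
/-!
With `su(2)` identified with Euclidean `ℝ³` via `⟪x, y⟫ = -tr (x y) / 2`, the tangent space of `S`
at `A` is `{X A | X ∈ su(2), X ⊥ A}`. Since `A₁ Y A₂ = (A₁ Y A₁⁻¹) A₁ A₂`, the image of the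
differential of `p₂` is `(A₁ᗮ + Cᗮ) A₁ A₂` with `C = A₁ A₂ A₁⁻¹`. As `A₁² = C² = -1`, the vectors
`A₁` and `C` are proportional only if `C = ±A₁`, i.e. `A₂ = ±A₁`. Otherwise the two planes `A₁ᗮ`
and `Cᗮ` span all of `su(2)`, and right multiplication by `A₁ A₂` is injective, so the image has
dimension `3`.
-/

/-- The tangent space at `A` to the submanifold `S` of trace-zero matrices of `SU(2)`,
described concretely: vectors `v` with `v * A⁻¹` skew-Hermitian and trace-free, and
`v` itself trace-free (the linearization of the trace-zero condition). -/
def tangentSetS (A : Matrix (Fin 2) (Fin 2) ℂ) : Set (Matrix (Fin 2) (Fin 2) ℂ) :=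
  {v | star (v * A⁻¹) = -(v * A⁻¹) ∧ (v * A⁻¹).trace = 0 ∧ v.trace = 0}

open Matrix

theorem Matrix.mul_self_eq_neg_one_of_det_eq_one_of_trace_eq_zero {R : Type*} [CommRing R]
    {A : Matrix (Fin 2) (Fin 2) R} (hdet : A.det = 1) (htr : A.trace = 0) : A * A = -1 := by
  rw [det_fin_two] at hdet
  rw [trace_fin_two] at htr
  ext i j
  fin_cases i <;> fin_cases j <;> simp [mul_apply]
  · linear_combination -hdet + A 0 0 * htr
  · linear_combination A 0 1 * htr
  · linear_combination A 1 0 * htr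
  · linear_combination -hdet + A 1 1 * htr

theorem span_singleton_inf_span_singleton_eq_bot {𝕜 R : Type*} [Field 𝕜] [Ring R]
    [Nontrivial R] [Algebra 𝕜 R] {a c : R} (ha : a * a = -1) (hc : c * c = -1) (hac : a ≠ c)
    (hac' : a ≠ -c) :
    (𝕜 ∙ a) ⊓ (𝕜 ∙ c) = ⊥ := by
  refine eq_bot_iff.mpr fun z ⟨hza, hzc⟩ => ?_
  obtain ⟨s, rfl⟩ := Submodule.mem_span_singleton.mp hza
  obtain ⟨t, hts⟩ := Submodule.mem_span_singleton.mp hzc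
  have hsq : s * s = t * t := by
    have h := congrArg (fun x => x * x) hts
    simp only [smul_mul_smul_comm, ha, hc, smul_neg, neg_inj,
      ← Algebra.algebraMap_eq_smul_one] at h
    exact ((algebraMap 𝕜 R).injective h).symm
  by_cases hs : s = 0
  · simp [hs]
  rcases mul_self_eq_mul_self_iff.mp hsq with rfl | rfl
  · exact absurd (smul_right_injective R hs hts).symm hac
  · rw [← neg_smul_neg] at hts
    exact absurd (smul_right_injective R hs hts).symm hac'

theorem Submodule.orthogonal_sup_orthogonal_eq_top {𝕜 E : Type*} [RCLike 𝕜]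
    [NormedAddCommGroup E] [InnerProductSpace 𝕜 E] [FiniteDimensional 𝕜 E]
    {K₁ K₂ : Submodule 𝕜 E} (h : K₁ ⊓ K₂ = ⊥) : K₁ᗮ ⊔ K₂ᗮ = ⊤ := by
  rw [← Submodule.orthogonal_eq_bot_iff, ← Submodule.inf_orthogonal, K₁.orthogonal_orthogonal,
    K₂.orthogonal_orthogonal, h]

def su2 : Submodule ℝ (Matrix (Fin 2) (Fin 2) ℂ) where
  carrier := {X | star X = -X ∧ X.trace = 0}
  add_mem' := fun ⟨hX, tX⟩ ⟨hY, tY⟩ =>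
    ⟨by rw [star_add, hX, hY, neg_add], by rw [trace_add, tX, tY, add_zero]⟩
  zero_mem' := ⟨by simp, by simp⟩
  smul_mem' := fun c X ⟨hX, tX⟩ =>
    ⟨by rw [star_smul, hX, smul_neg, star_trivial], by rw [trace_smul, tX, smul_zero]⟩

def su2Param : EuclideanSpace ℝ (Fin 3) →ₗ[ℝ] Matrix (Fin 2) (Fin 2) ℂ where
  toFun x := !![x 0 * Complex.I, x 1 + x 2 * Complex.I;
                -x 1 + x 2 * Complex.I, -(x 0 * Complex.I)]
  map_add' x y := by
    ext i j; fin_cases i <;> fin_cases j <;> simp <;> ring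
  map_smul' c x := by
    ext i j; fin_cases i <;> fin_cases j <;> simp <;> ring

theorem su2Param_mem (x : EuclideanSpace ℝ (Fin 3)) : su2Param x ∈ su2 := by
  constructor
  · ext i j; fin_cases i <;> fin_cases j <;> simp [su2Param, Complex.ext_iff]
  · simp [su2Param, trace_fin_two]

theorem trace_su2Param_mul (x y : EuclideanSpace ℝ (Fin 3)) :
    (su2Param x * su2Param y).trace = -2 * inner ℝ x y := by
  simp [su2Param, trace_fin_two, Fin.sum_univ_three, Complex.ext_iff, PiLp.inner_apply]
  constructor <;> ring

theorem range_su2Param : LinearMap.range su2Param = su2 := by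
  refine le_antisymm (LinearMap.range_le_iff_comap.mpr
    (Submodule.eq_top_iff'.mpr su2Param_mem)) ?_
  rintro X ⟨hs, ht⟩
  refine ⟨!₂[(X 0 0).im, (X 0 1).re, (X 0 1).im], ?_⟩
  have e00 := congrFun (congrFun hs 0) 0
  have e10 := congrFun (congrFun hs 1) 0
  have e11 : X 1 1 = -X 0 0 := by rw [trace_fin_two] at ht; linear_combination ht
  simp [star_apply, Complex.ext_iff] at e00 e10
  ext i j : 1
  fin_cases i <;> fin_cases j <;> simp [su2Param, Complex.ext_iff, e11] <;>
    (try constructor) <;> linarith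

theorem su2Param_injective : Function.Injective su2Param := by
  refine (injective_iff_map_eq_zero _).mpr fun x hx => ?_
  have h := trace_su2Param_mul x x
  rw [hx, zero_mul, trace_zero] at h
  have hxx : ((inner ℝ x x : ℝ) : ℂ) = 0 := by linear_combination h / 2
  exact inner_self_eq_zero.mp (Complex.ofReal_eq_zero.mp hxx)

theorem su2Param_orthogonal_sup_orthogonal_eq_top {a c : EuclideanSpace ℝ (Fin 3)}
    (ha : su2Param a * su2Param a = -1) (hc : su2Param c * su2Param c = -1)
    (hac : su2Param a ≠ su2Param c) (hac' : su2Param a ≠ -su2Param c) :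
    (ℝ ∙ a)ᗮ ⊔ (ℝ ∙ c)ᗮ = ⊤ := by
  refine Submodule.orthogonal_sup_orthogonal_eq_top
    (Submodule.map_injective_of_injective su2Param_injective ?_)
  rw [Submodule.map_inf _ su2Param_injective, Submodule.map_span, Submodule.map_span,
    Set.image_singleton, Set.image_singleton, Submodule.map_bot]
  exact span_singleton_inf_span_singleton_eq_bot ha hc hac hac'

theorem trace_su2Param_mul_eq_zero {a x : EuclideanSpace ℝ (Fin 3)} (hx : x ∈ (ℝ ∙ a)ᗮ) :
    (su2Param x * su2Param a).trace = 0 := by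
  rw [trace_su2Param_mul, real_inner_comm,
    Submodule.mem_orthogonal_singleton_iff_inner_right.mp hx, Complex.ofReal_zero, mul_zero]

section SU2

variable {A U X v : Matrix (Fin 2) (Fin 2) ℂ}

theorem mem_su2_of_mem_specialUnitaryGroup (hA : A ∈ specialUnitaryGroup (Fin 2) ℂ)
    (htr : A.trace = 0) : A ∈ su2 := by
  obtain ⟨hU, hdet⟩ := mem_specialUnitaryGroup_iff.mp hA
  refine ⟨?_, htr⟩
  calc star A = star A * (A * -A) := by
        rw [mul_neg, mul_self_eq_neg_one_of_det_eq_one_of_trace_eq_zero hdet htr, neg_neg, mul_one]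
    _ = -A := by rw [← mul_assoc, Unitary.star_mul_self_of_mem hU, one_mul]

theorem conj_mem_su2 (hU : U ∈ unitaryGroup (Fin 2) ℂ) (hX : X ∈ su2) : U * X * star U ∈ su2 :=
  ⟨by rw [star_mul, star_star, star_mul, hX.1, neg_mul, mul_neg, mul_assoc],
    by rw [trace_mul_cycle, Unitary.star_mul_self_of_mem hU, one_mul, hX.2]⟩

theorem mem_tangentSetS_iff (hU : U ∈ unitaryGroup (Fin 2) ℂ) :
    v ∈ tangentSetS U ↔ ∃ X ∈ su2, (X * U).trace = 0 ∧ X * U = v := by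
  have hdet : IsUnit U.det := UnitaryGroup.det_isUnit ⟨U, hU⟩
  constructor
  · intro hv
    have hvU : v * U⁻¹ * U = v := nonsing_inv_mul_cancel_right U v hdet
    exact ⟨v * U⁻¹, ⟨hv.1, hv.2.1⟩, by rw [hvU]; exact hv.2.2, hvU⟩
  · rintro ⟨X, hX, htr, rfl⟩
    have hXU : X * U * U⁻¹ = X := mul_nonsing_inv_cancel_right U X hdet
    exact ⟨by rw [hXU, hX.1], by rw [hXU, hX.2], htr⟩

end SU2

def mulTangentImage (A₁ A₂ : Matrix (Fin 2) (Fin 2) ℂ) : Set (Matrix (Fin 2) (Fin 2) ℂ) :=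
  {m | ∃ v ∈ tangentSetS A₁, ∃ w ∈ tangentSetS A₂, m = v * A₂ + A₁ * w}

section MulTangentImage

variable {A₁ A₂ : Matrix (Fin 2) (Fin 2) ℂ}

theorem span_mulTangentImage_le (hU₁ : A₁ ∈ unitaryGroup (Fin 2) ℂ)
    (hU₂ : A₂ ∈ unitaryGroup (Fin 2) ℂ) :
    Submodule.span ℝ (mulTangentImage A₁ A₂) ≤
      LinearMap.range (LinearMap.mulRight ℝ (A₁ * A₂) ∘ₗ su2Param) := by
  rw [Submodule.span_le]
  rintro _ ⟨_, hv, _, hw, rfl⟩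
  obtain ⟨X, hX, -, rfl⟩ := (mem_tangentSetS_iff hU₁).mp hv
  obtain ⟨Y, hY, -, rfl⟩ := (mem_tangentSetS_iff hU₂).mp hw
  obtain ⟨z, hz⟩ : X + A₁ * Y * star A₁ ∈ LinearMap.range su2Param :=
    range_su2Param ▸ add_mem hX (conj_mem_su2 hU₁ hY)
  refine ⟨z, ?_⟩
  simp [hz, add_mul, mul_assoc, Unitary.star_mul_self_of_mem hU₁]

theorem zero_mem_tangentSetS (A : Matrix (Fin 2) (Fin 2) ℂ) : 0 ∈ tangentSetS A := by
  simp [tangentSetS]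

theorem su2Param_mul_mem_mulTangentImage_of_orthogonal_left
    (hU₁ : A₁ ∈ unitaryGroup (Fin 2) ℂ) {a x : EuclideanSpace ℝ (Fin 3)} (ha : su2Param a = A₁)
    (hx : x ∈ (ℝ ∙ a)ᗮ) :
    su2Param x * (A₁ * A₂) ∈ mulTangentImage A₁ A₂ :=
  ⟨su2Param x * A₁,
    (mem_tangentSetS_iff hU₁).mpr ⟨_, su2Param_mem x, ha ▸ trace_su2Param_mul_eq_zero hx, rfl⟩,
    0, zero_mem_tangentSetS A₂, by rw [mul_zero, add_zero, mul_assoc]⟩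

theorem su2Param_mul_mem_mulTangentImage_of_orthogonal_right
    (hU₁ : A₁ ∈ unitaryGroup (Fin 2) ℂ) (hU₂ : A₂ ∈ unitaryGroup (Fin 2) ℂ)
    {c x : EuclideanSpace ℝ (Fin 3)}
    (hc : su2Param c = A₁ * A₂ * star A₁) (hx : x ∈ (ℝ ∙ c)ᗮ) :
    su2Param x * (A₁ * A₂) ∈ mulTangentImage A₁ A₂ := by
  have hX : star A₁ * su2Param x * A₁ ∈ su2 := by
    simpa using conj_mem_su2 (Unitary.star_mem hU₁) (su2Param_mem x)
  have htr : (star A₁ * su2Param x * A₁ * A₂).trace = 0 := by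
    rw [← trace_su2Param_mul_eq_zero hx, hc, mul_assoc, mul_assoc, trace_mul_comm, ← mul_assoc,
      ← mul_assoc, ← mul_assoc]
  refine ⟨0, zero_mem_tangentSetS A₁, _, (mem_tangentSetS_iff hU₂).mpr ⟨_, hX, htr, rfl⟩, ?_⟩
  simp [← mul_assoc, Unitary.mul_star_self_of_mem hU₁]

theorem span_mulTangentImage_eq_range (hU₁ : A₁ ∈ unitaryGroup (Fin 2) ℂ)
    (hU₂ : A₂ ∈ unitaryGroup (Fin 2) ℂ) {a c : EuclideanSpace ℝ (Fin 3)} (ha : su2Param a = A₁)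
    (hc : su2Param c = A₁ * A₂ * star A₁) (hac : (ℝ ∙ a)ᗮ ⊔ (ℝ ∙ c)ᗮ = ⊤) :
    Submodule.span ℝ (mulTangentImage A₁ A₂) =
      LinearMap.range (LinearMap.mulRight ℝ (A₁ * A₂) ∘ₗ su2Param) := by
  refine le_antisymm (span_mulTangentImage_le hU₁ hU₂) ?_
  rw [LinearMap.range_eq_map, ← hac, Submodule.map_sup, sup_le_iff]
  constructor <;> rintro _ ⟨x, hx, rfl⟩ <;> apply Submodule.subset_span
  exacts [su2Param_mul_mem_mulTangentImage_of_orthogonal_left hU₁ ha hx,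
    su2Param_mul_mem_mulTangentImage_of_orthogonal_right hU₁ hU₂ hc hx]

end MulTangentImage

theorem mulRight_comp_su2Param_injective {P : Matrix (Fin 2) (Fin 2) ℂ} (hP : IsUnit P) :
    Function.Injective (LinearMap.mulRight ℝ P ∘ₗ su2Param) :=
  hP.mul_left_injective.comp su2Param_injective

/-- The map `p₂ : S × S → SU(2)`, `p₂(A₁,A₂) = A₁·A₂`, is a submersion at `(A₁,A₂)`
whenever `A₁ ≠ A₂` and `A₁ ≠ -A₂`: the image of its differential
`(v,w) ↦ v·A₂ + A₁·w` spans a real subspace of dimension `3` (the full tangent space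
of the 3-dimensional group `SU(2)` at `A₁·A₂`). -/
theorem p2_submersion_rank_three (A₁ A₂ : Matrix (Fin 2) (Fin 2) ℂ)
    (hA₁ : A₁ ∈ Matrix.specialUnitaryGroup (Fin 2) ℂ) (htr₁ : A₁.trace = 0)
    (hA₂ : A₂ ∈ Matrix.specialUnitaryGroup (Fin 2) ℂ) (htr₂ : A₂.trace = 0)
    (hne : A₁ ≠ A₂) (hne' : A₁ ≠ -A₂) :
    Module.finrank ℝ (Submodule.span ℝ
      {m : Matrix (Fin 2) (Fin 2) ℂ |
        ∃ v ∈ tangentSetS A₁, ∃ w ∈ tangentSetS A₂, m = v * A₂ + A₁ * w}) = 3 := by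
  obtain ⟨hU₁, hdet₁⟩ := mem_specialUnitaryGroup_iff.mp hA₁
  obtain ⟨hU₂, hdet₂⟩ := mem_specialUnitaryGroup_iff.mp hA₂
  let σ := Unitary.conjStarAlgAut ℝ (Matrix (Fin 2) (Fin 2) ℂ) ⟨A₁, hU₁⟩
  have hσA₁ : σ A₁ = A₁ := by simp [σ, mul_assoc, Unitary.mul_star_self_of_mem hU₁]
  obtain ⟨a, ha⟩ : A₁ ∈ LinearMap.range su2Param :=
    range_su2Param ▸ mem_su2_of_mem_specialUnitaryGroup hA₁ htr₁
  obtain ⟨c, hc⟩ : σ A₂ ∈ LinearMap.range su2Param :=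
    range_su2Param ▸ conj_mem_su2 hU₁ (mem_su2_of_mem_specialUnitaryGroup hA₂ htr₂)
  have hsq₁ : A₁ * A₁ = -1 := mul_self_eq_neg_one_of_det_eq_one_of_trace_eq_zero hdet₁ htr₁
  have hsq₂ : σ A₂ * σ A₂ = -1 := by
    rw [← map_mul, mul_self_eq_neg_one_of_det_eq_one_of_trace_eq_zero hdet₂ htr₂, map_neg,
      map_one]
  have hne₁ : A₁ ≠ σ A₂ := fun h => hne (σ.injective (hσA₁.trans h))
  have hne₂ : A₁ ≠ -σ A₂ := fun h =>
    hne' (σ.injective (show σ A₁ = σ (-A₂) by rw [hσA₁, map_neg, h]))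
  have hac : (ℝ ∙ a)ᗮ ⊔ (ℝ ∙ c)ᗮ = ⊤ := su2Param_orthogonal_sup_orthogonal_eq_top
    (ha ▸ hsq₁) (hc ▸ hsq₂) (ha ▸ hc ▸ hne₁) (ha ▸ hc ▸ hne₂)
  change Module.finrank ℝ (Submodule.span ℝ (mulTangentImage A₁ A₂)) = 3
  rw [span_mulTangentImage_eq_range hU₁ hU₂ ha hc hac,
    LinearMap.finrank_range_of_inj (mulRight_comp_su2Param_injective
      (Unitary.isUnit_coe (U := ⟨A₁ * A₂, mul_mem hU₁ hU₂⟩))),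
    finrank_euclideanSpace_fin]
end

section
/- Let σ = σ₁ⁿ act on S × S (where S is the 2-sphere of trace-zero SU(2) matrices) via σ₁(a, b) = (b, b a b⁻¹). For a, b lying on a common great circle parametrized by angle with b at angle 0 and a at angle α, one has σ(α, 0) = (-(n-1)α, -nα) (angles mod 2π); in particular (a, b) is a fixed point of σ if and only if n·α ≡ 0 mod 2π. -/
/-- The point at angle `θ` on the great circle through `J` in the `2`-sphere `S` of
trace-zero `SU(2)` matrices. -/
noncomputable def circPt (θ : ℝ) : Matrix (Fin 2) (Fin 2) ℂ :=
  !![Complex.I * Real.cos θ, (Real.sin θ : ℂ);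
     -(Real.sin θ : ℂ), -(Complex.I * Real.cos θ)]

/-- The elementary braid `σ₁` acting on `S × S` by `σ₁(a, b) = (b, b·a·b⁻¹)`. -/
noncomputable def sigma1 (p : Matrix (Fin 2) (Fin 2) ℂ × Matrix (Fin 2) (Fin 2) ℂ) :
    Matrix (Fin 2) (Fin 2) ℂ × Matrix (Fin 2) (Fin 2) ℂ :=
  (p.2, p.2 * p.1 * p.2⁻¹)

/-!
Writing `P = circPt`, one has `(P b)⁻¹ = -P b` and `P b * P a * P b = -P (2b - a)`, so
conjugation by `P b` is the reflection `θ ↦ 2b - θ` of the angle coordinate. Hence `σ₁` acts on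
angle pairs by the linear map `(a, b) ↦ (b, 2b - a)`, whose `n`-th iterate sends `(α, 0)` to
`(-(n-1)α, -nα)`. Conjugation by `g ∈ SU(2)` commutes with `σ₁` and is injective, which
transports this to every great circle.
-/

open Real

lemma circPt_mul_self (θ : ℝ) : circPt θ * circPt θ = -1 := by
  ext i j
  fin_cases i <;> fin_cases j <;>
    simp [circPt, Matrix.mul_apply, Fin.sum_univ_two] <;>
    ring_nf <;> simp only [Complex.I_sq, Complex.sin_sq] <;> ring

lemma circPt_inv (θ : ℝ) : (circPt θ)⁻¹ = -circPt θ :=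
  Matrix.inv_eq_right_inv (by rw [mul_neg, circPt_mul_self, neg_neg])

lemma circPt_mul_circPt_mul_circPt (θ φ : ℝ) :
    circPt θ * circPt φ * circPt θ = -circPt (2 * θ - φ) := by
  ext i j
  fin_cases i <;> fin_cases j <;>
    simp [circPt, Matrix.mul_apply, Fin.sum_univ_two, Complex.cos_sub, Complex.sin_sub,
      Complex.cos_two_mul, Complex.sin_two_mul] <;>
    ring_nf <;> simp only [Complex.I_sq, Complex.I_pow_three, Complex.sin_sq] <;> ring

lemma circPt_eq_circPt_iff {x y : ℝ} : circPt x = circPt y ↔ (x : Angle) = y := by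
  refine ⟨fun h ↦ Angle.cos_sin_inj ?_ ?_, fun h ↦ ?_⟩
  · simpa [circPt, Complex.I_ne_zero, -Complex.ofReal_cos] using congrFun (congrFun h 0) 0
  · simpa [circPt, -Complex.ofReal_sin] using congrFun (congrFun h 0) 1
  · have hc : Real.cos x = Real.cos y := by rw [← Angle.cos_coe, h, Angle.cos_coe]
    have hs : Real.sin x = Real.sin y := by rw [← Angle.sin_coe, h, Angle.sin_coe]
    simp [circPt, hc, hs, -Complex.ofReal_cos, -Complex.ofReal_sin]

lemma sigma1_circPt (a b : ℝ) :
    sigma1 (circPt a, circPt b) = (circPt b, circPt (2 * b - a)) := by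
  rw [sigma1, circPt_inv, mul_neg, circPt_mul_circPt_mul_circPt, neg_neg]

lemma sigma1_iterate_circPt (n : ℕ) (α : ℝ) :
    sigma1^[n] (circPt α, circPt 0) =
      (circPt (-((n : ℝ) - 1) * α), circPt (-(n : ℝ) * α)) := by
  induction n with
  | zero => simp
  | succ n ih =>
    rw [Function.iterate_succ_apply', ih, sigma1_circPt]
    congr 2 <;> push_cast <;> ring

lemma Matrix.injective_conj_of_isUnit_det {ι R : Type*} [Fintype ι] [DecidableEq ι] [CommRing R]
    {g : Matrix ι ι R} (hg : IsUnit g.det) : Function.Injective (fun a ↦ g * a * g⁻¹) :=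
  fun x y h ↦ by
    simpa [mul_assoc, Matrix.nonsing_inv_mul_cancel_left g _ hg, Matrix.nonsing_inv_mul g hg]
      using congrArg (fun m ↦ g⁻¹ * m * g) h

lemma commute_sigma1_conj {g : Matrix (Fin 2) (Fin 2) ℂ} (hg : IsUnit g.det) :
    Function.Commute sigma1 (Prod.map (fun a ↦ g * a * g⁻¹) (fun a ↦ g * a * g⁻¹)) := by
  rintro ⟨a, b⟩
  simp [sigma1, Matrix.mul_inv_rev, Matrix.nonsing_inv_nonsing_inv g hg, mul_assoc,
    Matrix.nonsing_inv_mul_cancel_left g _ hg]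

lemma Real.Angle.coe_neg_sub_one_mul_eq_coe_iff (x α : ℝ) :
    ((-(x - 1) * α : ℝ) : Angle) = α ↔ ((x * α : ℝ) : Angle) = 0 := by
  rw [show -(x - 1) * α = α - x * α by ring, Angle.coe_sub, sub_eq_self]

theorem sigma1_iterate_on_great_circle_general (g : Matrix (Fin 2) (Fin 2) ℂ)
    (hg : g ∈ Matrix.specialUnitaryGroup (Fin 2) ℂ) (n : ℕ) (α : ℝ) :
    sigma1^[n] (g * circPt α * g⁻¹, g * circPt 0 * g⁻¹) =
      (g * circPt (-((n : ℝ) - 1) * α) * g⁻¹, g * circPt (-(n : ℝ) * α) * g⁻¹) ∧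
    (sigma1^[n] (g * circPt α * g⁻¹, g * circPt 0 * g⁻¹) =
        (g * circPt α * g⁻¹, g * circPt 0 * g⁻¹) ↔
      ∃ k : ℤ, (n : ℝ) * α = 2 * Real.pi * k) := by
  have hdet : IsUnit g.det := (Matrix.mem_specialUnitaryGroup_iff.mp hg).2 ▸ isUnit_one
  have hiter := (commute_sigma1_conj hdet).iterate_left n (circPt α, circPt 0)
  simp only [Prod.map, sigma1_iterate_circPt] at hiter
  have hconj := Matrix.injective_conj_of_isUnit_det hdet
  refine ⟨hiter, ?_⟩
  rw [hiter, Prod.mk.injEq, hconj.eq_iff, hconj.eq_iff,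
    circPt_eq_circPt_iff, circPt_eq_circPt_iff, Angle.coe_neg_sub_one_mul_eq_coe_iff, neg_mul,
    Angle.coe_neg, Angle.coe_zero, neg_eq_zero, and_self, ← Angle.coe_zero,
    Angle.angle_eq_iff_two_pi_dvd_sub, sub_zero]

/-- Let `σ = σ₁ⁿ` act on `S × S` via `σ₁(a,b) = (b, b·a·b⁻¹)`.  For `a, b` on a common great
circle (any such pair is `(g·P(α)·g⁻¹, g·P(0)·g⁻¹)` for some `g ∈ SU(2)`, where `P`
parametrizes the circle through `J` by arc length), one has
`σ(α, 0) = (-(n-1)α, -nα)` in the angle coordinates; in particular `(a,b)` is a fixed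
point of `σ` if and only if `n·α ≡ 0 (mod 2π)`. -/
theorem sigma1_iterate_on_great_circle (g : Matrix (Fin 2) (Fin 2) ℂ)
    (hg : g ∈ Matrix.specialUnitaryGroup (Fin 2) ℂ) (n : ℕ) (hn : 1 ≤ n) (α : ℝ) :
    sigma1^[n] (g * circPt α * g⁻¹, g * circPt 0 * g⁻¹) =
      (g * circPt (-((n : ℝ) - 1) * α) * g⁻¹, g * circPt (-(n : ℝ) * α) * g⁻¹) ∧
    (sigma1^[n] (g * circPt α * g⁻¹, g * circPt 0 * g⁻¹) =
        (g * circPt α * g⁻¹, g * circPt 0 * g⁻¹) ↔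
      ∃ k : ℤ, (n : ℝ) * α = 2 * Real.pi * k) :=
  sigma1_iterate_on_great_circle_general g hg n α
end
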